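/- For call-by-name xCL extended with erratic choice ⊕ and parallel composition ∥ (with value former ∥ᵥ): for every closed term t and every value v, t ⇓ v if and only if t →* v. -/

import Mathlib

/-- Closed terms of xCL extended with erratic choice `⊕`, parallel composition
`∥` and the value former `∥ᵥ`. -/
inductive Tm : Type
  | S : Tm
  | K : Tm
  | I : Tm
  | S1 : Tm → Tm
  | K1 : Tm → Tm
  | S2 : Tm → Tm → Tm
  | app : Tm → Tm → Tm
  | oplus : Tm → Tm → Tm
  | par : Tm → Tm → Tm
  | parv : Tm → Tm → Tm

/-- Values: topmost constructor among `S, K, I, S', K', S'', ∥ᵥ`. -/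
def Tm.IsValue : Tm → Prop
  | .app _ _ => False
  | .oplus _ _ => False
  | .par _ _ => False
  | _ => True

/-- Labeled value transitions `t ─s→ t'`, including
`(t ∥ᵥ s) ─r→ (t r) ∥ (s r)`. -/
inductive LStep : Tm → Tm → Tm → Prop
  | S (t : Tm) : LStep .S t (.S1 t)
  | S1 (t s : Tm) : LStep (.S1 t) s (.S2 t s)
  | S2 (t s r : Tm) : LStep (.S2 t s) r (.app (.app t r) (.app s r))
  | K (t : Tm) : LStep .K t (.K1 t)
  | K1 (t s : Tm) : LStep (.K1 t) s t
  | I (t : Tm) : LStep .I t t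
  | parv (t s r : Tm) : LStep (.parv t s) r (.par (.app t r) (.app s r))

/-- Unlabeled small-step transitions `t → t'`. -/
inductive Step : Tm → Tm → Prop
  | appL {t t' : Tm} (s : Tm) : Step t t' → Step (.app t s) (.app t' s)
  | beta {t t' s : Tm} : LStep t s t' → Step (.app t s) t'
  | choiceL (t s : Tm) : Step (.oplus t s) t
  | choiceR (t s : Tm) : Step (.oplus t s) s
  | parBoth {t t' s s' : Tm} : Step t t' → Step s s' → Step (.par t s) (.par t' s')
  | parR {t s s' : Tm} : t.IsValue → Step s s' → Step (.par t s) (.par t s')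
  | parL {t t' s : Tm} : Step t t' → s.IsValue → Step (.par t s) (.par t' s)
  | parVal {t s : Tm} : t.IsValue → s.IsValue → Step (.par t s) (.parv t s)

/-- Big-step semantics `t ⇓ v`. -/
inductive Big : Tm → Tm → Prop
  | val {v : Tm} : v.IsValue → Big v v
  | appI {s t v : Tm} : Big s .I → Big t v → Big (.app s t) v
  | appK {s t : Tm} : Big s .K → Big (.app s t) (.K1 t)
  | appS {s t : Tm} : Big s .S → Big (.app s t) (.S1 t)
  | appK1 {s t r v : Tm} : Big s (.K1 r) → Big r v → Big (.app s t) v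
  | appS1 {s t r : Tm} : Big s (.S1 r) → Big (.app s t) (.S2 r t)
  | appS2 {s t r q v : Tm} :
      Big s (.S2 r q) → Big (.app (.app r t) (.app q t)) v → Big (.app s t) v
  | choiceL {t s v : Tm} : Big t v → Big (.oplus t s) v
  | choiceR {t s v : Tm} : Big s v → Big (.oplus t s) v
  | appParv {s t v u w : Tm} :
      Big s (.parv v u) → Big (.par (.app v t) (.app u t)) w → Big (.app s t) w
  | par {s t v u : Tm} : Big s v → Big t u → Big (.par s t) (.parv v u)

/-!
From `t ⇓ v` to `t →* v`, by induction on the derivation: an application first reduces its head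
to the value found by `⇓` and then fires that value's labelled transition, and the two reductions
of a parallel composition are interleaved with `parBoth`, `parL` and `parR`.
Conversely, `⇓` is closed under small-step expansion (`t → t'` and `t' ⇓ v` give `t ⇓ v`), since
every big-step derivation of `s t ⇓ v` factors as `s ⇓ f`, `f ─t→ r` and `r ⇓ v`; walking back
along `t →* v` from `v ⇓ v` then gives `t ⇓ v`.
-/

open Relation

lemma LStep.isValue {f t r : Tm} (h : LStep f t r) : f.IsValue := by
  cases h <;> trivial

lemma reflTransGen_step_app_left {t t' : Tm} (s : Tm) (h : ReflTransGen Step t t') :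
    ReflTransGen Step (.app t s) (.app t' s) :=
  h.lift (Tm.app · s) fun _ _ => Step.appL s

lemma reflTransGen_step_app_of_lStep {s f t r : Tm} (hs : ReflTransGen Step s f)
    (hl : LStep f t r) : ReflTransGen Step (.app s t) r :=
  (reflTransGen_step_app_left t hs).tail (.beta hl)

lemma reflTransGen_step_par {s t v u : Tm} (hs : ReflTransGen Step s v)
    (ht : ReflTransGen Step t u) (hv : v.IsValue) (hu : u.IsValue) :
    ReflTransGen Step (.par s t) (.par v u) := by
  induction hs using ReflTransGen.head_induction_on generalizing t with
  | refl => exact ht.lift (Tm.par v) fun _ _ h => .parR hv h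
  | head hstep hrest ih =>
    rcases ht.cases_head with rfl | ⟨t', hstep', hrest'⟩
    · exact (ReflTransGen.head hstep hrest).lift (Tm.par · t) fun _ _ h => .parL h hu
    · exact .head (.parBoth hstep hstep') (ih hrest')

lemma Big.isValue {t v : Tm} (h : Big t v) : v.IsValue := by
  induction h <;> first | assumption | trivial

lemma Big.reflTransGen_step {t v : Tm} (h : Big t v) : ReflTransGen Step t v := by
  induction h with
  | val _ => exact .refl
  | appI _ _ ih₁ ih₂ => exact (reflTransGen_step_app_of_lStep ih₁ (.I _)).trans ih₂
  | appK _ ih => exact reflTransGen_step_app_of_lStep ih (.K _)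
  | appS _ ih => exact reflTransGen_step_app_of_lStep ih (.S _)
  | appK1 _ _ ih₁ ih₂ => exact (reflTransGen_step_app_of_lStep ih₁ (.K1 _ _)).trans ih₂
  | appS1 _ ih => exact reflTransGen_step_app_of_lStep ih (.S1 _ _)
  | appS2 _ _ ih₁ ih₂ => exact (reflTransGen_step_app_of_lStep ih₁ (.S2 _ _ _)).trans ih₂
  | appParv _ _ ih₁ ih₂ => exact (reflTransGen_step_app_of_lStep ih₁ (.parv _ _ _)).trans ih₂
  | choiceL _ ih => exact .head (.choiceL _ _) ih
  | choiceR _ ih => exact .head (.choiceR _ _) ih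
  | par h₁ h₂ ih₁ ih₂ =>
    exact (reflTransGen_step_par ih₁ ih₂ h₁.isValue h₂.isValue).tail
      (.parVal h₁.isValue h₂.isValue)

lemma Big.app_iff {s t v : Tm} :
    Big (.app s t) v ↔ ∃ f r, Big s f ∧ LStep f t r ∧ Big r v := by
  constructor
  · intro h
    cases h with
    | appI hs hv => exact ⟨_, _, hs, .I _, hv⟩
    | appK hs => exact ⟨_, _, hs, .K _, .val trivial⟩
    | appS hs => exact ⟨_, _, hs, .S _, .val trivial⟩
    | appK1 hs hv => exact ⟨_, _, hs, .K1 _ _, hv⟩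
    | appS1 hs => exact ⟨_, _, hs, .S1 _ _, .val trivial⟩
    | appS2 hs hv => exact ⟨_, _, hs, .S2 _ _ _, hv⟩
    | appParv hs hv => exact ⟨_, _, hs, .parv _ _ _, hv⟩
    | val hv => exact hv.elim
  · rintro ⟨f, r, hs, hl, hr⟩
    cases hl with
    | S => cases hr with | val _ => exact .appS hs
    | S1 => cases hr with | val _ => exact .appS1 hs
    | S2 => exact .appS2 hs hr
    | K => cases hr with | val _ => exact .appK hs
    | K1 => exact .appK1 hs hr
    | I => exact .appI hs hr
    | parv => exact .appParv hs hr

lemma Big.of_step {t t' v : Tm} (h : Step t t') (hb : Big t' v) : Big t v := by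
  induction h generalizing v with
  | appL s _ ih =>
    obtain ⟨f, r, hs, hl, hr⟩ := Big.app_iff.mp hb
    exact Big.app_iff.mpr ⟨f, r, ih hs, hl, hr⟩
  | beta hl => exact Big.app_iff.mpr ⟨_, _, .val hl.isValue, hl, hb⟩
  | choiceL => exact .choiceL hb
  | choiceR => exact .choiceR hb
  | parBoth _ _ ih₁ ih₂ =>
    cases hb with
    | par h₁ h₂ => exact .par (ih₁ h₁) (ih₂ h₂)
    | val hv => exact hv.elim
  | parR _ _ ih =>
    cases hb with
    | par h₁ h₂ => exact .par h₁ (ih h₂)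
    | val hv => exact hv.elim
  | parL _ _ ih =>
    cases hb with
    | par h₁ h₂ => exact .par (ih h₁) h₂
    | val hv => exact hv.elim
  | parVal ht hs =>
    cases hb with
    | val _ => exact .par (.val ht) (.val hs)

lemma Big.of_reflTransGen_step {t v : Tm} (h : ReflTransGen Step t v) (hv : v.IsValue) :
    Big t v := by
  induction h using ReflTransGen.head_induction_on with
  | refl => exact .val hv
  | head hstep _ ih => exact .of_step hstep ih

/-- Big-step/small-step equivalence for call-by-name xCL with erratic choice
and parallel composition. -/
theorem xCL_parallel_big_iff_small (t v : Tm) (hv : v.IsValue) :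
    Big t v ↔ Relation.ReflTransGen Step t v :=
  ⟨Big.reflTransGen_step, fun h => .of_reflTransGen_step h hv⟩
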